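/- arXiv:math/0412408 — 3 statements merged into one kernel-verified Lean document; each statement's English description precedes it below -/
import Mathlib

section
/- A vector u : S → ℝ ∪ {−∞} is super-harmonic (i.e. (Au)_i ≤ u_i for all i ∈ S) if and only if u_i = sup_{j ∈ S} (A*_{ij} + u_j) for all i ∈ S. -/
/-!
Superharmonicity propagates along paths: by induction on the length, every path `p` from `i` to
`j` satisfies `w(p) + u_j ≤ u_i`, and taking the supremum over paths gives `A* u ≤ u`. The empty
path gives `u ≤ A* u`. Conversely, `A ≤ A*` entrywise, so `A u ≤ A* u = u`.
-/

open Filter Topology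

noncomputable section

namespace MaxPlus

variable {S : Type*}

/-- Weight of the path `p 0, p 1, ..., p n` for the kernel `A`. -/
def pathWeight (A : S → S → EReal) (p : ℕ → S) (n : ℕ) : EReal :=
  ∑ k ∈ Finset.range n, A (p k) (p (k + 1))

/-- The max-plus star kernel `A*`: supremum of weights of paths of length `≥ 0`. -/
def star (A : S → S → EReal) (i j : S) : EReal :=
  ⨆ (n : ℕ) (p : ℕ → S) (_ : p 0 = i ∧ p n = j), pathWeight A p n

/-- The max-plus kernel `A⁺`: supremum of weights of paths of length `≥ 1`. -/
def plus (A : S → S → EReal) (i j : S) : EReal :=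
  ⨆ (n : ℕ) (_ : 1 ≤ n) (p : ℕ → S) (_ : p 0 = i ∧ p n = j), pathWeight A p n

/-- `π` is a left super-harmonic row vector (with full support, being real valued). -/
def LeftSuperharmonic (A : S → S → EReal) (π : S → ℝ) : Prop :=
  ∀ j, (⨆ i, ((π i : EReal) + A i j)) ≤ (π j : EReal)

/-- The Martin kernel `K_{ij} = A*_{ij} - π_j`. -/
def K (A : S → S → EReal) (π : S → ℝ) (i j : S) : EReal :=
  star A i j - (π j : EReal)

/-- `K♭_{ij} = A⁺_{ij} - π_j`. -/
def Kflat (A : S → S → EReal) (π : S → ℝ) (i j : S) : EReal :=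
  plus A i j - (π j : EReal)

/-- The set `𝒦` of columns of the Martin kernel. -/
def kerCols (A : S → S → EReal) (π : S → ℝ) : Set (S → EReal) :=
  Set.range fun j => fun i => K A π i j

/-- The Martin space `ℳ`: closure of `𝒦` in the product topology. -/
def martin (A : S → S → EReal) (π : S → ℝ) : Set (S → EReal) :=
  closure (kerCols A π)

/-- `μ_u(w)`: the limsup of `π_j + u_j` as `K_{·j} → w`. -/
def mu (A : S → S → EReal) (π : S → ℝ) (u : S → EReal) (w : S → EReal) : EReal :=
  ⨅ (W : Set (S → EReal)) (_ : W ∈ 𝓝 w),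
    ⨆ (j : S) (_ : (fun i => K A π i j) ∈ W), ((π j : EReal) + u j)

/-- `w♭_i`: the liminf of `K♭_{ij}` as `K_{·j} → w`. -/
def flat (A : S → S → EReal) (π : S → ℝ) (w : S → EReal) (i : S) : EReal :=
  ⨆ (W : Set (S → EReal)) (_ : W ∈ 𝓝 w),
    ⨅ (j : S) (_ : (fun i' => K A π i' j) ∈ W), Kflat A π i j

/-- The kernel `H(z,w) = μ_w(z)`. -/
def H (A : S → S → EReal) (π : S → ℝ) (z w : S → EReal) : EReal := mu A π w z

/-- The kernel `H♭(z,w) = μ_{w♭}(z)`. -/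
def Hflat (A : S → S → EReal) (π : S → ℝ) (z w : S → EReal) : EReal :=
  mu A π (flat A π w) z

/-- The minimal Martin space `ℳᵐ = {w ∈ ℳ : H♭(w,w) = 0}`. -/
def martinMin (A : S → S → EReal) (π : S → ℝ) : Set (S → EReal) :=
  {w | w ∈ martin A π ∧ Hflat A π w w = 0}

/-- The maximal circuit mean `ρ(A)`. -/
def maxCircuitMean (A : S → S → EReal) : EReal :=
  ⨆ (k : ℕ) (_ : 1 ≤ k) (p : ℕ → S) (_ : p k = p 0),
    (((k : ℝ)⁻¹ : ℝ) : EReal) * pathWeight A p k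

/-- `α`-almost-geodesic with respect to the left super-harmonic vector `π`. -/
def IsAlmostGeodesic (A : S → S → EReal) (π : S → ℝ) (x : ℕ → S) : Prop :=
  ∃ α : ℝ, 0 ≤ α ∧ ∀ k : ℕ,
    (π (x k) : EReal) ≤ (α : EReal) + (π (x 0) : EReal) + pathWeight A x k

/-- The set `𝒮` of `π`-integrable super-harmonic vectors. -/
def Sset (A : S → S → EReal) (π : S → ℝ) : Set (S → EReal) :=
  {u | (∀ i, u i ≠ ⊤) ∧ (∀ i, (⨆ j, A i j + u j) ≤ u i) ∧
    (⨆ j, ((π j : EReal) + u j)) < ⊤}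

/-- The set `ℋ` of `π`-integrable harmonic vectors. -/
def Hset (A : S → S → EReal) (π : S → ℝ) : Set (S → EReal) :=
  {u | (∀ i, u i ≠ ⊤) ∧ (∀ i, (⨆ j, A i j + u j) = u i) ∧
    (⨆ j, ((π j : EReal) + u j)) < ⊤}

/-- A vector is normalised if `sup_j (π_j + u_j) = 0`. -/
def Normalised (π : S → ℝ) (u : S → EReal) : Prop :=
  (⨆ j, ((π j : EReal) + u j)) = 0

/-- `ξ` is an extremal generator of `V`. -/
def ExtremalGen (V : Set (S → EReal)) (ξ : S → EReal) : Prop :=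
  ξ ∈ V ∧ ξ ≠ (fun _ => (⊥ : EReal)) ∧
    ∀ u v, u ∈ V → v ∈ V → ξ = (fun i => u i ⊔ v i) → ξ = u ∨ ξ = v

end MaxPlus

namespace EReal

/-- No side condition on `c` is needed, since `⊥ + ⊤ = ⊥` in `EReal`. -/
theorem iSup_add_le_iff {ι : Sort*} {f : ι → EReal} {c d : EReal} :
    (⨆ k, f k) + c ≤ d ↔ ∀ k, f k + c ≤ d := by
  refine ⟨fun h k => (add_le_add_left (le_iSup f k) c).trans h, fun h => ?_⟩
  refine add_le_of_forall_lt fun a ha b hb => ?_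
  obtain ⟨k, hk⟩ := lt_iSup_iff.1 ha
  exact (add_le_add hk.le hb.le).trans (h k)

end EReal

namespace MaxPlus

section

variable {S : Type*}

theorem pathWeight_succ (A : S → S → EReal) (p : ℕ → S) (n : ℕ) :
    pathWeight A p (n + 1) = pathWeight A p n + A (p n) (p (n + 1)) :=
  Finset.sum_range_succ _ _

theorem zero_le_star_self (A : S → S → EReal) (i : S) : 0 ≤ star A i i :=
  le_iSup_of_le 0 <| le_iSup₂_of_le (fun _ => i) ⟨rfl, rfl⟩ le_rfl

theorem le_star (A : S → S → EReal) (i j : S) : A i j ≤ star A i j := by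
  refine le_iSup_of_le 1 <| le_iSup₂_of_le (fun k => if k = 0 then i else j) ⟨rfl, rfl⟩ ?_
  simp [pathWeight]

section Superharmonic

variable {A : S → S → EReal} {u : S → EReal} (hu : ∀ i, (⨆ j, A i j + u j) ≤ u i)
include hu

theorem pathWeight_add_le_of_superharmonic (p : ℕ → S) (n : ℕ) :
    pathWeight A p n + u (p n) ≤ u (p 0) := by
  induction n with
  | zero => simp [pathWeight]
  | succ n ih =>
    have step : A (p n) (p (n + 1)) + u (p (n + 1)) ≤ u (p n) :=
      (le_iSup (fun j => A (p n) j + u j) _).trans (hu (p n))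
    calc pathWeight A p (n + 1) + u (p (n + 1))
        = pathWeight A p n + (A (p n) (p (n + 1)) + u (p (n + 1))) := by
          rw [pathWeight_succ, add_assoc]
      _ ≤ pathWeight A p n + u (p n) := add_le_add_right step _
      _ ≤ u (p 0) := ih

theorem star_add_le_of_superharmonic (i j : S) : star A i j + u j ≤ u i := by
  simp only [star, EReal.iSup_add_le_iff]
  rintro n p ⟨rfl, rfl⟩
  exact pathWeight_add_le_of_superharmonic hu p n

end Superharmonic

end

theorem superharmonic_iff_star_fixed_general {S : Type*} (A : S → S → EReal)
    (u : S → EReal) :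
    (∀ i, (⨆ j, A i j + u j) ≤ u i) ↔ (∀ i, u i = ⨆ j, star A i j + u j) := by
  refine ⟨fun hu i => le_antisymm ?_ ?_, fun hfix i => ?_⟩
  · calc u i ≤ star A i i + u i := le_add_of_nonneg_left (zero_le_star_self A i)
      _ ≤ ⨆ j, star A i j + u j := le_iSup (fun j => star A i j + u j) i
  · exact iSup_le (star_add_le_of_superharmonic hu i)
  · rw [hfix i]
    exact iSup_mono fun j => add_le_add_left (le_star A i j) (u j)

/-- a vector `u : S → ℝ ∪ {−∞}` is super-harmonic (`(Au)_i ≤ u_i` for all `i`)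
iff `u_i = sup_j (A*_{ij} + u_j)` for all `i`. -/
theorem superharmonic_iff_star_fixed {S : Type*} (A : S → S → EReal)
    (hA : ∀ i j, A i j ≠ ⊤) (u : S → EReal) (hu : ∀ i, u i ≠ ⊤) :
    (∀ i, (⨆ j, A i j + u j) ≤ u i) ↔ (∀ i, u i = ⨆ j, star A i j + u j) :=
  superharmonic_iff_star_fixed_general A u

end MaxPlus
end
end

section
/- For all z, w ∈ ℳ: if w ≠ z, or if w = z ∈ ℬ, then H(z, w) = H♭(z, w); and if w = z ∈ 𝒦, then H(z, w) = 0. -/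
open Filter Topology

noncomputable section

/-!
Off the diagonal `A⁺` and `A*` agree, so `K♭_{ij} = K_{ij}` for `j ≠ i`, while `K♭ ≤ K` always.
As coordinates are continuous in the product topology, the liminf defining `w♭_i` is then `w_i`
unless `w = K_{·i}`. The limsup `μ_u(z)` only sees `u` on columns near `z`, so `H(z,w) = H♭(z,w)`
whenever `z ≠ w` (restrict to the neighbourhood `{w}ᶜ` of `z`) or `w ∉ 𝒦`.
For `z = w = K_{·j}`, super-harmonicity of `π` gives `π_i + K_{ij} ≤ 0` for every `i`, and the
term `i = j` is `A*_{jj} ≥ 0`.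
-/

namespace MaxPlus

section

variable {S : Type*} {A : S → S → EReal} {π : S → ℝ}

theorem LeftSuperharmonic.coe_add_pathWeight_le (hπ : LeftSuperharmonic A π) (p : ℕ → S)
    (n : ℕ) : (π (p 0) : EReal) + pathWeight A p n ≤ π (p n) := by
  induction n with
  | zero => simp [pathWeight]
  | succ n ih =>
    calc (π (p 0) : EReal) + pathWeight A p (n + 1)
        = (π (p 0) + pathWeight A p n) + A (p n) (p (n + 1)) := by
          rw [pathWeight, Finset.sum_range_succ, add_assoc]; rfl
      _ ≤ π (p n) + A (p n) (p (n + 1)) := by gcongr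
      _ ≤ π (p (n + 1)) :=
          (le_iSup (fun i => (π i : EReal) + A i (p (n + 1))) (p n)).trans (hπ _)

theorem LeftSuperharmonic.star_le (hπ : LeftSuperharmonic A π) (i j : S) :
    star A i j ≤ ((π j - π i : ℝ) : EReal) := by
  refine iSup_le fun n => iSup_le fun p => iSup_le fun ⟨hp0, hpn⟩ => ?_
  have h := hπ.coe_add_pathWeight_le p n
  rw [hp0, hpn] at h
  rw [EReal.coe_sub, EReal.le_sub_iff_add_le (.inl (EReal.coe_ne_bot _))
    (.inl (EReal.coe_ne_top _)), add_comm]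
  exact h

theorem LeftSuperharmonic.coe_add_K_le_zero (hπ : LeftSuperharmonic A π) (i j : S) :
    (π i : EReal) + K A π i j ≤ 0 := by
  rw [K, ← add_sub_assoc, EReal.sub_nonpos, add_comm, ← EReal.le_sub_iff_add_le
    (.inl (EReal.coe_ne_bot _)) (.inl (EReal.coe_ne_top _)), ← EReal.coe_sub]
  exact hπ.star_le i j

theorem star_self_nonneg (i : S) : 0 ≤ star A i i :=
  le_iSup_of_le 0 <| le_iSup_of_le (fun _ => i) <| le_iSup_of_le ⟨rfl, rfl⟩ <| by
    simp [pathWeight]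

theorem coe_add_K_self (i : S) : (π i : EReal) + K A π i i = star A i i := by
  rw [K, ← add_sub_assoc, EReal.add_sub_cancel_left]

theorem plus_le_star (i j : S) : plus A i j ≤ star A i j :=
  iSup_le fun n => iSup_le fun _ => iSup_le fun p => iSup_le fun h =>
    le_iSup_of_le n <| le_iSup_of_le p <| le_iSup_of_le h le_rfl

theorem star_eq_plus_of_ne {i j : S} (h : i ≠ j) : star A i j = plus A i j := by
  refine le_antisymm (iSup_le fun n => iSup_le fun p => iSup_le fun hp => ?_) (plus_le_star i j)
  obtain _ | n := n
  · exact absurd (hp.1.symm.trans hp.2) h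
  · exact le_iSup_of_le (n + 1) <| le_iSup_of_le n.succ_pos <| le_iSup_of_le p <|
      le_iSup_of_le hp le_rfl

theorem Kflat_le_K (i j : S) : Kflat A π i j ≤ K A π i j :=
  EReal.sub_le_sub (plus_le_star i j) le_rfl

theorem Kflat_eq_K_of_ne {i j : S} (h : i ≠ j) : Kflat A π i j = K A π i j := by
  rw [Kflat, K, star_eq_plus_of_ne h]

theorem flat_le {w : S → EReal} (hw : w ∈ martin A π) (j : S) : flat A π w j ≤ w j := by
  refine iSup₂_le fun W hW => le_of_forall_gt_imp_ge_of_dense fun c hc => ?_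
  have hV : W ∩ {v | v j < c} ∈ 𝓝 w :=
    inter_mem hW ((isOpen_Iio.preimage (continuous_apply j)).mem_nhds hc)
  obtain ⟨-, ⟨hbW, hbc⟩, b, rfl⟩ := mem_closure_iff_nhds.mp hw _ hV
  exact (iInf₂_le b hbW).trans ((Kflat_le_K j b).trans hbc.le)

theorem le_flat {w : S → EReal} {j : S} (hne : w ≠ fun i => K A π i j) :
    w j ≤ flat A π w j := by
  refine le_of_forall_lt_imp_le_of_dense fun c hc => ?_
  have hW : {fun i => K A π i j}ᶜ ∩ {v | c < v j} ∈ 𝓝 w :=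
    (isOpen_compl_singleton.inter (isOpen_Ioi.preimage (continuous_apply j))).mem_nhds ⟨hne, hc⟩
  refine le_iSup₂_of_le _ hW (le_iInf₂ fun b hb => ?_)
  have hjb : j ≠ b := by rintro rfl; exact hb.1 rfl
  rw [Kflat_eq_K_of_ne hjb]
  exact hb.2.le

theorem flat_eq {w : S → EReal} (hw : w ∈ martin A π) {j : S}
    (hne : w ≠ fun i => K A π i j) : flat A π w j = w j :=
  (flat_le hw j).antisymm (le_flat hne)

theorem flat_eq_self {w : S → EReal} (hw : w ∈ martin A π) (hwK : w ∉ kerCols A π) :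
    flat A π w = w :=
  funext fun j => flat_eq hw fun h => hwK ⟨j, h.symm⟩

theorem mu_le_mu_of_eqOn {u v z : S → EReal} {U : Set (S → EReal)} (hU : U ∈ 𝓝 z)
    (huv : ∀ j, (fun i => K A π i j) ∈ U → u j = v j) : mu A π u z ≤ mu A π v z :=
  le_iInf₂ fun W hW => iInf₂_le_of_le (W ∩ U) (inter_mem hW hU) <|
    iSup₂_le fun j ⟨hjW, hjU⟩ => le_iSup₂_of_le j hjW (by rw [huv j hjU])

theorem mu_congr {u v z : S → EReal} {U : Set (S → EReal)} (hU : U ∈ 𝓝 z)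
    (huv : ∀ j, (fun i => K A π i j) ∈ U → u j = v j) : mu A π u z = mu A π v z :=
  (mu_le_mu_of_eqOn hU huv).antisymm (mu_le_mu_of_eqOn hU fun j hj => (huv j hj).symm)

theorem mu_le_of_forall_le {u z : S → EReal} {c : EReal} (h : ∀ j, (π j : EReal) + u j ≤ c) :
    mu A π u z ≤ c :=
  iInf₂_le_of_le Set.univ univ_mem <| iSup₂_le fun j _ => h j

theorem le_mu_column {u : S → EReal} (j : S) :
    (π j : EReal) + u j ≤ mu A π u (fun i => K A π i j) :=
  le_iInf₂ fun _ hW => le_iSup₂_of_le j (mem_of_mem_nhds hW) le_rfl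

end

theorem H_eq_Hflat_or_zero_general {S : Type*} (A : S → S → EReal)
    (π : S → ℝ) (hπ : LeftSuperharmonic A π)
    (z w : S → EReal) (hw : w ∈ martin A π) :
    ((w ≠ z ∨ (w = z ∧ z ∈ martin A π \ kerCols A π)) →
      H A π z w = Hflat A π z w) ∧
    ((w = z ∧ z ∈ kerCols A π) → H A π z w = 0) := by
  constructor
  · rintro (hne | ⟨rfl, -, hwK⟩)
    · exact mu_congr (isOpen_compl_singleton.mem_nhds hne.symm)
        fun j hj => (flat_eq hw fun h => hj h.symm).symm
    · rw [Hflat, flat_eq_self hw hwK, H]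
  · rintro ⟨rfl, j, rfl⟩
    refine (mu_le_of_forall_le fun i => hπ.coe_add_K_le_zero i j).antisymm ?_
    calc (0 : EReal) ≤ star A j j := star_self_nonneg j
      _ = π j + K A π j j := (coe_add_K_self j).symm
      _ ≤ H A π (K A π · j) (K A π · j) := le_mu_column (u := (K A π · j)) j

/-- for `z, w ∈ ℳ`: if `w ≠ z`, or `w = z ∈ ℬ = ℳ ∖ 𝒦`, then
`H(z,w) = H♭(z,w)`; and if `w = z ∈ 𝒦`, then `H(z,w) = 0`. -/
theorem H_eq_Hflat_or_zero {S : Type*} (A : S → S → EReal)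
    (hA : ∀ i j, A i j ≠ ⊤) (π : S → ℝ) (hπ : LeftSuperharmonic A π)
    (z w : S → EReal) (hz : z ∈ martin A π) (hw : w ∈ martin A π) :
    ((w ≠ z ∨ (w = z ∧ z ∈ martin A π \ kerCols A π)) →
      H A π z w = Hflat A π z w) ∧
    ((w = z ∧ z ∈ kerCols A π) → H A π z w = 0) :=
  H_eq_Hflat_or_zero_general A π hπ z w hw

end MaxPlus
end
end

section
/- Let b, b′ ∈ S be basepoints, let ℳ, ℬ, 𝒦, ℳᵐ be the Martin space, Martin boundary, Martin kernel columns and minimal Martin space constructed from π = A*_{b·}, and let ℳ′, ℬ′, 𝒦′, ℳ′ᵐ be those constructed from π′ = A*_{b′·}. Then the map φ : ℳ → ℳ′, φ(w) = w − w_{b′} (which is well defined since w_{b′} ∈ ℝ for all w ∈ ℳ), is a homeomorphism from ℳ onto ℳ′ sending K_{·j} to K′_{·j} for every j ∈ S; it maps 𝒦 onto 𝒦′, ℬ onto ℬ′, and ℳᵐ onto ℳ′ᵐ. -/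
open Filter Topology

noncomputable section

/-! The triangle inequality `A*_{b'b} + A*_{bj} ≤ A*_{b'j}` and its mirror image trap
`K_{b'j} = π'_j - π_j` between `π'_b` and `-π_{b'}`. Hence every `w ∈ ℳ` has `w_b = 0` and
`w_{b'}` finite, and `K'_{·j} = K_{·j} - K_{b'j}`; so `φ w = w - w_{b'}` is continuous on `ℳ`,
carries `𝒦` onto `𝒦'`, and is inverted by `w ↦ w - w_b`.

Along the filter of indices `j` with `K_{·j} → w`, which `φ` identifies with the filter of
indices `j` with `K'_{·j} → φ w`, `μ` is a limsup and `♭` a liminf. Since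
`K♭'_{ij} = K♭_{ij} - K_{b'j}` and `K_{b'j} → w_{b'}`, the vector `w♭` shifts by `-w_{b'}`;
so `π' + (φ w)♭` differs from `π + w♭` by a term tending to `0`, and `H♭(w, w)` is unchanged. -/

open Set

namespace EReal

variable {ι : Type*} {f : Filter ι} [f.NeBot] {u v : ι → EReal} {c : EReal}

lemma limsup_add_of_tendsto (hv : Tendsto v f (𝓝 c)) (hc : c ≠ ⊥) (hc' : c ≠ ⊤) :
    limsup (u + v) f = limsup u f + c := by
  rw [← hv.limsup_eq] at hc hc' ⊢
  refine le_antisymm (limsup_add_le (.inr hc') (.inr hc)) ?_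
  simpa only [hv.liminf_eq, hv.limsup_eq] using le_limsup_add (u := u) (v := v) (f := f)

lemma liminf_add_of_tendsto (hv : Tendsto v f (𝓝 c)) (hc : c ≠ ⊥) (hc' : c ≠ ⊤) :
    liminf (u + v) f = liminf u f + c := by
  rw [← hv.limsup_eq] at hc hc'
  refine le_antisymm ?_
    (by simpa only [hv.liminf_eq] using le_liminf_add (u := u) (v := v) (f := f))
  rw [add_comm u, add_comm _ c, ← hv.limsup_eq]
  exact liminf_add_le (.inl hc) (.inl hc')

lemma continuousAt_sub {p : EReal × EReal} (h : p.2 ≠ ⊥) (h' : p.2 ≠ ⊤) :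
    ContinuousAt (fun q : EReal × EReal => q.1 - q.2) p := by
  have hadd : ContinuousAt (fun q : EReal × EReal => q.1 + q.2) (p.1, -p.2) :=
    continuousAt_add (.inr (by simpa using h')) (.inr (by simpa using h))
  exact hadd.comp (f := fun q : EReal × EReal => (q.1, -q.2))
    (continuousAt_fst.prodMk continuousAt_snd.neg)

end EReal

lemma Homeomorph.comap_val_comp_nhds {X Y ι : Type*} [TopologicalSpace X] [TopologicalSpace Y]
    {s : Set X} {t : Set Y} (e : s ≃ₜ t) (f : ι → s) (x : s) :
    comap (fun i => (e (f i) : Y)) (𝓝 (e x : Y)) = comap (fun i => (f i : X)) (𝓝 (x : X)) := by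
  calc comap (fun i => (e (f i) : Y)) (𝓝 (e x : Y))
      = comap f (comap e (𝓝 (e x))) := by rw [nhds_subtype, comap_comap, comap_comap]; rfl
    _ = comap (fun i => (f i : X)) (𝓝 (x : X)) := by
      rw [e.comap_nhds_eq, e.symm_apply_apply, nhds_subtype, comap_comap]; rfl

namespace MaxPlus

section Paths

variable {S : Type*} (A : S → S → EReal)

lemma pathWeight_le_star (p : ℕ → S) (n : ℕ) : pathWeight A p n ≤ star A (p 0) (p n) :=
  le_iSup_of_le n (le_iSup_of_le p (le_iSup_of_le ⟨rfl, rfl⟩ le_rfl))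

lemma pathWeight_concat {p q : ℕ → S} {m : ℕ} (n : ℕ) (hpq : p m = q 0) :
    pathWeight A (fun t => if t < m then p t else q (t - m)) (m + n) =
      pathWeight A p m + pathWeight A q n := by
  rw [pathWeight, Finset.sum_range_add]
  congr 1
  · refine Finset.sum_congr rfl fun t ht => ?_
    have htm : t < m := Finset.mem_range.1 ht
    rcases (Nat.succ_le_of_lt htm).lt_or_eq with h | h
    · simp [htm, h]
    · subst h
      simp [hpq]
  · refine Finset.sum_congr rfl fun t _ => ?_
    simp only [show ¬m + t < m by omega, show ¬m + t + 1 < m by omega, if_false,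
      Nat.add_sub_cancel_left, show m + t + 1 - m = t + 1 by omega]

lemma star_add_star_le (i k j : S) : star A i k + star A k j ≤ star A i j := by
  refine EReal.add_le_of_forall_lt fun a ha c hc => ?_
  simp only [star, lt_iSup_iff] at ha hc
  obtain ⟨m, p, ⟨rfl, rfl⟩, hap⟩ := ha
  obtain ⟨n, q, ⟨hq0, rfl⟩, hcq⟩ := hc
  have hstart : (if 0 < m then p 0 else q 0) = p 0 := by
    rcases Nat.eq_zero_or_pos m with rfl | hm
    · simp [hq0]
    · simp [hm]
  calc a + c ≤ pathWeight A p m + pathWeight A q n := add_le_add hap.le hcq.le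
    _ = pathWeight A (fun t => if t < m then p t else q (t - m)) (m + n) :=
      (pathWeight_concat A n hq0.symm).symm
    _ ≤ star A (p 0) (q n) := by
      simpa [hstart] using pathWeight_le_star A (fun t => if t < m then p t else q (t - m)) (m + n)

end Paths

section Basepoint

variable {S : Type*} {A : S → S → EReal} {π π' : S → ℝ} {b b' : S}

lemma add_le_of_star_eq (hb : ∀ j, star A b j = (π j : EReal))
    (hb' : ∀ j, star A b' j = (π' j : EReal)) (j : S) : π' b + π j ≤ π' j := by
  have h := star_add_star_le A b' b j
  rw [hb' b, hb j, hb' j] at h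
  exact_mod_cast h

lemma K_basepoint (hb : ∀ j, star A b j = (π j : EReal)) (j : S) : K A π b j = 0 := by
  rw [K, hb j, ← EReal.coe_sub, sub_self, EReal.coe_zero]

lemma K_eq_coe_sub (hb' : ∀ j, star A b' j = (π' j : EReal)) (j : S) :
    K A π b' j = ((π' j - π j : ℝ) : EReal) := by
  rw [K, hb' j, EReal.coe_sub]

lemma K_sub_K_eq (hb' : ∀ j, star A b' j = (π' j : EReal)) (x j : S) :
    K A π x j - K A π b' j = K A π' x j := by
  rw [K_eq_coe_sub hb', K, K]
  simp only [sub_eq_add_neg, ← EReal.coe_neg, add_assoc, ← EReal.coe_add]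
  congr 2
  ring

lemma Kflat_eq_sub_K (hb' : ∀ j, star A b' j = (π' j : EReal)) (i j : S) :
    Kflat A π' i j = Kflat A π i j - K A π b' j := by
  rw [K_eq_coe_sub hb', Kflat, Kflat]
  simp only [sub_eq_add_neg, ← EReal.coe_neg, add_assoc, ← EReal.coe_add]
  congr 2
  ring

lemma apply_eq_zero_of_mem_martin (hb : ∀ j, star A b j = (π j : EReal)) {w : S → EReal}
    (hw : w ∈ martin A π) : w b = 0 :=
  closure_minimal (by rintro _ ⟨j, rfl⟩; exact K_basepoint hb j)
    (isClosed_eq (continuous_apply b) continuous_const) hw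

lemma apply_mem_Icc_of_mem_martin (hb : ∀ j, star A b j = (π j : EReal))
    (hb' : ∀ j, star A b' j = (π' j : EReal)) {w : S → EReal} (hw : w ∈ martin A π) :
    w b' ∈ Icc ((π' b : ℝ) : EReal) ((-π b' : ℝ) : EReal) := by
  refine closure_minimal ?_ (isClosed_Icc.preimage (continuous_apply b')) hw
  rintro _ ⟨j, rfl⟩
  simp only [mem_preimage, K_eq_coe_sub hb', mem_Icc, EReal.coe_le_coe_iff]
  constructor <;> linarith [add_le_of_star_eq hb hb' j, add_le_of_star_eq hb' hb j]

lemma exists_coe_eq_apply_of_mem_martin (hb : ∀ j, star A b j = (π j : EReal))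
    (hb' : ∀ j, star A b' j = (π' j : EReal)) {w : S → EReal} (hw : w ∈ martin A π) :
    ∃ β : ℝ, w b' = β := by
  obtain ⟨hlo, hhi⟩ := apply_mem_Icc_of_mem_martin hb hb' hw
  exact ⟨(w b').toReal, (EReal.coe_toReal (ne_top_of_le_ne_top (EReal.coe_ne_top _) hhi)
    (ne_bot_of_le_ne_bot (EReal.coe_ne_bot _) hlo)).symm⟩

end Basepoint

section Rebase

variable {S : Type*}

/-- The map `φ` of the paper is `rebase b'`. -/
def rebase (c : S) (v : S → EReal) : S → EReal := fun x => v x - v c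

lemma continuousAt_rebase {c : S} {v : S → EReal} (h : v c ≠ ⊥) (h' : v c ≠ ⊤) :
    ContinuousAt (rebase c) v :=
  continuousAt_pi.2 fun x => (EReal.continuousAt_sub h h').comp
    (f := fun u : S → EReal => (u x, u c))
    ((continuous_apply x).prodMk (continuous_apply c)).continuousAt

variable {A : S → S → EReal} {π π' : S → ℝ} {b b' : S}

lemma rebase_K (hb' : ∀ j, star A b' j = (π' j : EReal)) (j : S) :
    rebase b' (fun i => K A π i j) = fun i => K A π' i j :=
  funext fun x => K_sub_K_eq hb' x j

lemma continuousOn_rebase (hb : ∀ j, star A b j = (π j : EReal))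
    (hb' : ∀ j, star A b' j = (π' j : EReal)) : ContinuousOn (rebase b') (martin A π) := by
  intro w hw
  obtain ⟨β, hβ⟩ := exists_coe_eq_apply_of_mem_martin hb hb' hw
  exact (continuousAt_rebase (by simp [hβ]) (by simp [hβ])).continuousWithinAt

lemma mapsTo_rebase (hb : ∀ j, star A b j = (π j : EReal))
    (hb' : ∀ j, star A b' j = (π' j : EReal)) :
    MapsTo (rebase b') (martin A π) (martin A π') := by
  intro w hw
  refine closure_mono ?_ ((continuousOn_rebase hb hb').image_closure ⟨w, hw, rfl⟩)
  rintro _ ⟨_, ⟨j, rfl⟩, rfl⟩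
  exact ⟨j, (rebase_K hb' j).symm⟩

lemma rebase_rebase (hb : ∀ j, star A b j = (π j : EReal))
    (hb' : ∀ j, star A b' j = (π' j : EReal)) {w : S → EReal} (hw : w ∈ martin A π) :
    rebase b (rebase b' w) = w := by
  obtain ⟨β, hβ⟩ := exists_coe_eq_apply_of_mem_martin hb hb' hw
  funext x
  simp only [rebase, apply_eq_zero_of_mem_martin hb hw, hβ, sub_eq_add_neg, zero_add,
    ← EReal.coe_neg, add_assoc, ← EReal.coe_add, neg_neg, neg_add_cancel, EReal.coe_zero, add_zero]

def martinHomeomorph (hb : ∀ j, star A b j = (π j : EReal))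
    (hb' : ∀ j, star A b' j = (π' j : EReal)) : martin A π ≃ₜ martin A π' where
  toFun := (mapsTo_rebase hb hb').restrict _ _ _
  invFun := (mapsTo_rebase hb' hb).restrict _ _ _
  left_inv w := Subtype.ext (rebase_rebase hb hb' w.2)
  right_inv v := Subtype.ext (rebase_rebase hb' hb v.2)
  continuous_toFun := (continuousOn_rebase hb hb').mapsToRestrict _
  continuous_invFun := (continuousOn_rebase hb' hb).mapsToRestrict _

end Rebase

section KernelFilter

variable {S : Type*} {A : S → S → EReal} {π π' : S → ℝ} {b b' : S}

def kernelFilter (A : S → S → EReal) (π : S → ℝ) (w : S → EReal) : Filter S :=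
  comap (fun j i => K A π i j) (𝓝 w)

lemma mu_eq_limsup (u w : S → EReal) :
    mu A π u w = limsup (fun j => (π j : EReal) + u j) (kernelFilter A π w) :=
  ((𝓝 w).basis_sets.comap _).limsup_eq_iInf_iSup.symm

lemma flat_eq_liminf (w : S → EReal) (i : S) :
    flat A π w i = liminf (fun j => Kflat A π i j) (kernelFilter A π w) :=
  ((𝓝 w).basis_sets.comap _).liminf_eq_iSup_iInf.symm

lemma kernelFilter_neBot {w : S → EReal} (hw : w ∈ martin A π) : (kernelFilter A π w).NeBot :=
  comap_neBot_iff.2 fun U hU => by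
    obtain ⟨_, hvU, j, rfl⟩ := mem_closure_iff_nhds.1 hw U hU
    exact ⟨j, hvU⟩

lemma tendsto_K_kernelFilter (w : S → EReal) (x : S) :
    Tendsto (fun j => K A π x j) (kernelFilter A π w) (𝓝 (w x)) :=
  ((continuous_apply x).tendsto w).comp tendsto_comap

variable (hb : ∀ j, star A b j = (π j : EReal)) (hb' : ∀ j, star A b' j = (π' j : EReal))
include hb hb'

lemma kernelFilter_martinHomeomorph (w : martin A π) :
    kernelFilter A π' (martinHomeomorph hb hb' w) = kernelFilter A π w := by
  let col : S → martin A π := fun j => ⟨fun i => K A π i j, subset_closure ⟨j, rfl⟩⟩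
  have hcol : (fun j i => K A π' i j) = fun j => (martinHomeomorph hb hb' (col j) : S → EReal) :=
    funext fun j => (rebase_K hb' j).symm
  rw [kernelFilter, hcol]
  exact (martinHomeomorph hb hb').comap_val_comp_nhds col w

lemma flat_martinHomeomorph (w : martin A π) (i : S) :
    flat A π' (martinHomeomorph hb hb' w) i = flat A π w i - (w : S → EReal) b' := by
  obtain ⟨β, hβ⟩ := exists_coe_eq_apply_of_mem_martin hb hb' w.2
  have := kernelFilter_neBot w.2
  have hlim : Tendsto (fun j => -K A π b' j) (kernelFilter A π w) (𝓝 (-(β : EReal))) :=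
    hβ ▸ (tendsto_K_kernelFilter (w : S → EReal) b').neg
  rw [flat_eq_liminf, flat_eq_liminf, kernelFilter_martinHomeomorph, hβ, sub_eq_add_neg,
    ← EReal.liminf_add_of_tendsto hlim (by simp) (by simp)]
  congr 1
  funext j
  rw [Kflat_eq_sub_K hb', sub_eq_add_neg]
  rfl

lemma Hflat_martinHomeomorph (w : martin A π) :
    Hflat A π' (martinHomeomorph hb hb' w) (martinHomeomorph hb hb' w) = Hflat A π w w := by
  obtain ⟨β, hβ⟩ := exists_coe_eq_apply_of_mem_martin hb hb' w.2
  have := kernelFilter_neBot w.2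
  have hshift : ∀ j, (π' j : EReal) + flat A π' (martinHomeomorph hb hb' w) j =
      ((π j : EReal) + flat A π w j) + ((π' j - π j - β : ℝ) : EReal) := fun j => by
    rw [flat_martinHomeomorph, hβ]
    induction flat A π w j using EReal.rec
    · simp
    · norm_cast; ring
    · rw [EReal.top_sub_coe, EReal.coe_add_top, EReal.coe_add_top, EReal.top_add_coe]
  have hlim : Tendsto (fun j => ((π' j - π j - β : ℝ) : EReal)) (kernelFilter A π w) (𝓝 0) := by
    have h := tendsto_K_kernelFilter (A := A) (π := π) (w : S → EReal) b'
    simp only [K_eq_coe_sub hb', hβ, EReal.tendsto_coe] at h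
    simpa using EReal.tendsto_coe.2 (h.sub_const β)
  simp only [Hflat, mu_eq_limsup, kernelFilter_martinHomeomorph, hshift]
  rw [← Pi.add_def, EReal.limsup_add_of_tendsto hlim (by simp) (by simp), add_zero]

lemma martinHomeomorph_mem_kerCols_iff (w : martin A π) :
    (martinHomeomorph hb hb' w : S → EReal) ∈ kerCols A π' ↔ (w : S → EReal) ∈ kerCols A π := by
  constructor
  · rintro ⟨j, hj⟩
    refine ⟨j, ?_⟩
    rw [← rebase_rebase hb hb' w.2]
    exact (rebase_K hb j).symm.trans (congrArg (rebase b) hj)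
  · rintro ⟨j, hj⟩
    exact ⟨j, (rebase_K hb' j).symm.trans (congrArg (rebase b') hj)⟩

lemma martinHomeomorph_mem_martinMin_iff (w : martin A π) :
    (martinHomeomorph hb hb' w : S → EReal) ∈ martinMin A π' ↔
      (w : S → EReal) ∈ martinMin A π :=
  and_congr (iff_of_true (martinHomeomorph hb hb' w).2 w.2)
    (by rw [Hflat_martinHomeomorph])

end KernelFilter

theorem basepoint_change_homeomorph_general {S : Type*} (A : S → S → EReal)
    (b b' : S) (π π' : S → ℝ)
    (hb : ∀ j, star A b j = (π j : EReal))
    (hb' : ∀ j, star A b' j = (π' j : EReal)) :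
    (∀ w ∈ martin A π, w b' ≠ ⊥ ∧ w b' ≠ ⊤) ∧
    (∀ j x : S, K A π x j - K A π b' j = K A π' x j) ∧
    ∃ e : ↥(martin A π) ≃ₜ ↥(martin A π'),
      (∀ w : ↥(martin A π), ∀ x : S,
          (e w : S → EReal) x = (w : S → EReal) x - (w : S → EReal) b') ∧
      (∀ w : ↥(martin A π),
          ((w : S → EReal) ∈ kerCols A π ↔ (e w : S → EReal) ∈ kerCols A π')) ∧
      (∀ w : ↥(martin A π),
          ((w : S → EReal) ∈ martin A π \ kerCols A π ↔
            (e w : S → EReal) ∈ martin A π' \ kerCols A π')) ∧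
      (∀ w : ↥(martin A π),
          ((w : S → EReal) ∈ martinMin A π ↔ (e w : S → EReal) ∈ martinMin A π')) := by
  refine ⟨fun w hw => ?_, fun j x => K_sub_K_eq hb' x j, martinHomeomorph hb hb', fun _ _ => rfl,
    fun w => (martinHomeomorph_mem_kerCols_iff hb hb' w).symm, fun w => ?_,
    fun w => (martinHomeomorph_mem_martinMin_iff hb hb' w).symm⟩
  · obtain ⟨β, hβ⟩ := exists_coe_eq_apply_of_mem_martin hb hb' hw
    simp [hβ]
  · simp only [Set.mem_sdiff, w.2, (martinHomeomorph hb hb' w).2, true_and,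
      martinHomeomorph_mem_kerCols_iff]

/-- the Martin spaces (boundaries, kernel columns, minimal Martin spaces)
constructed from two basepoints `b, b'` are homeomorphic via
`φ(w) = w - w_{b'}` (well defined since `w_{b'} ∈ ℝ` on `ℳ`), which sends `K_{·j}` to
`K'_{·j}`, `𝒦` onto `𝒦'`, `ℬ` onto `ℬ'` and `ℳᵐ` onto `ℳ'ᵐ`. -/
theorem basepoint_change_homeomorph {S : Type*} (A : S → S → EReal)
    (hA : ∀ i j, A i j ≠ ⊤) (b b' : S) (π π' : S → ℝ)
    (hb : ∀ j, star A b j = (π j : EReal))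
    (hb' : ∀ j, star A b' j = (π' j : EReal)) :
    (∀ w ∈ martin A π, w b' ≠ ⊥ ∧ w b' ≠ ⊤) ∧
    (∀ j x : S, K A π x j - K A π b' j = K A π' x j) ∧
    ∃ e : ↥(martin A π) ≃ₜ ↥(martin A π'),
      (∀ w : ↥(martin A π), ∀ x : S,
          (e w : S → EReal) x = (w : S → EReal) x - (w : S → EReal) b') ∧
      (∀ w : ↥(martin A π),
          ((w : S → EReal) ∈ kerCols A π ↔ (e w : S → EReal) ∈ kerCols A π')) ∧
      (∀ w : ↥(martin A π),
          ((w : S → EReal) ∈ martin A π \ kerCols A π ↔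
            (e w : S → EReal) ∈ martin A π' \ kerCols A π')) ∧
      (∀ w : ↥(martin A π),
          ((w : S → EReal) ∈ martinMin A π ↔ (e w : S → EReal) ∈ martinMin A π')) :=
  basepoint_change_homeomorph_general A b b' π π' hb hb'

end MaxPlus
end
end
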